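/- A positive integer n satisfies δ(n) < 1 if and only if n is of one of the following forms, and in each case its complexity is as listed: (1) n = 3^ℓ with ℓ ≥ 1, with ‖n‖ = 3ℓ; (2) n = 2^k·3^ℓ with 1 ≤ k ≤ 9 and ℓ ≥ 0, with ‖n‖ = 2k + 3ℓ; (3) n = 5·2^k·3^ℓ with 0 ≤ k ≤ 3 and ℓ ≥ 0, with ‖n‖ = 5 + 2k + 3ℓ; (4) n = 7·2^k·3^ℓ with 0 ≤ k ≤ 2 and ℓ ≥ 0, with ‖n‖ = 6 + 2k + 3ℓ; (5) n = 19·3^ℓ with ℓ ≥ 0, with ‖n‖ = 9 + 3ℓ; (6) n = 13·3^ℓ with ℓ ≥ 0, with ‖n‖ = 8 + 3ℓ; (7) n = (3^k + 1)·3^ℓ with k ≥ 1 and ℓ ≥ 0, with ‖n‖ = 1 + 3k + 3ℓ. -/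
import Mathlib


/-- `CanWrite n k` means the positive integer `n` can be written using exactly `k` ones
combined by addition and multiplication. -/
inductive CanWrite : ℕ → ℕ → Prop
  | one : CanWrite 1 1
  | add {a b j k : ℕ} : CanWrite a j → CanWrite b k → CanWrite (a + b) (j + k)
  | mul {a b j k : ℕ} : CanWrite a j → CanWrite b k → CanWrite (a * b) (j + k)

/-- The integer complexity `‖n‖`: the least number of ones needed to write `n`. -/
noncomputable def cpx (n : ℕ) : ℕ := sInf {k | CanWrite n k}

/-- The defect `δ(n) = ‖n‖ - 3 log₃ n`. -/
noncomputable def defect (n : ℕ) : ℝ := (cpx n : ℝ) - 3 * Real.logb 3 n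

/-- `n` is stable if `‖3^k n‖ = 3k + ‖n‖` for all `k ≥ 0`. -/
def Stable (n : ℕ) : Prop := ∀ k : ℕ, cpx (3 ^ k * n) = 3 * k + cpx n

/-- The stabilization length `K(n)`: the least `k` such that `3^k n` is stable. -/
noncomputable def stabLen (n : ℕ) : ℕ := sInf {k | Stable (3 ^ k * n)}

/-- The stable complexity `‖n‖_st`: equal to `‖3^k n‖ - 3k` for any `k` with `3^k n` stable. -/
noncomputable def stableCpx (n : ℕ) : ℕ :=
  sInf {m | ∃ k : ℕ, Stable (3 ^ k * n) ∧ cpx (3 ^ k * n) = m + 3 * k}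

/-- The stable defect `δ_st(n) = ‖n‖_st - 3 log₃ n`. -/
noncomputable def stableDefect (n : ℕ) : ℝ := (stableCpx n : ℝ) - 3 * Real.logb 3 n

lemma cube1 {b : ℕ} (hb : 3 ≤ b) : (b+1)^3 ≤ 3*b^3 := by
  obtain ⟨t, rfl⟩ := Nat.exists_eq_add_of_le hb
  nlinarith [t.zero_le, sq_nonneg t]
lemma cube2 {b : ℕ} (hb : 5 ≤ b) : (b+2)^3 ≤ 3*b^3 := by
  obtain ⟨t, rfl⟩ := Nat.exists_eq_add_of_le hb
  nlinarith [t.zero_le, sq_nonneg t]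

lemma pow3_ge {k c : ℕ} (h : c ≤ k) : 3^c ≤ 3^k := Nat.pow_le_pow_right (by norm_num) h

lemma cw_self : ∀ n, 0 < n → CanWrite n n := by
  intro n hn
  induction n with
  | zero => omega
  | succ m ih =>
    rcases Nat.eq_zero_or_pos m with h | h
    · subst h; exact CanWrite.one
    · exact CanWrite.add (ih h) CanWrite.one

lemma cw_bound {n k : ℕ} (h : CanWrite n k) : 1 ≤ n ∧ 1 ≤ k ∧ n ^ 3 ≤ 3 ^ k := by
  induction h with
  | one => norm_num
  | @add a b j k _ _ iha ihb =>
    obtain ⟨ha, hj, ha3⟩ := iha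
    obtain ⟨hb, hk, hb3⟩ := ihb
    refine ⟨by omega, by omega, ?_⟩
    rw [pow_add]
    have hj3 : 3 ≤ 3 ^ j := pow3_ge hj
    have hk3 : 3 ≤ 3 ^ k := pow3_ge hk
    rcases Nat.lt_or_ge a 2 with hA | hA
    · -- a = 1
      have ha1 : a = 1 := by omega
      subst ha1
      rcases Nat.lt_or_ge b 3 with hB | hB
      · interval_cases b
        · nlinarith
        · have hk2 : 2 ≤ k := by
            by_contra hc; push_neg at hc; interval_cases k <;> norm_num at hb3
          have h9 : 9 ≤ 3 ^ k := pow3_ge hk2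
          nlinarith
      · have h1 : (1 + b)^3 ≤ 3 * b^3 := by rw [add_comm]; exact cube1 hB
        calc (1+b)^3 ≤ 3 * b^3 := h1
          _ ≤ 3^j * 3^k := Nat.mul_le_mul hj3 hb3
    · rcases Nat.lt_or_ge b 2 with hB | hB
      · -- b = 1
        have hb1 : b = 1 := by omega
        subst hb1
        rcases Nat.lt_or_ge a 3 with hA2 | hA2
        · interval_cases a
          have hj2 : 2 ≤ j := by
            by_contra hc; push_neg at hc; interval_cases j <;> norm_num at ha3
          have h9 : 9 ≤ 3 ^ j := pow3_ge hj2
          nlinarith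
        · calc (a+1)^3 ≤ 3 * a^3 := cube1 hA2
            _ = a^3 * 3 := by ring
            _ ≤ 3^j * 3^k := Nat.mul_le_mul ha3 hk3
      · have hab : a + b ≤ a * b := by nlinarith
        calc (a+b)^3 ≤ (a*b)^3 := Nat.pow_le_pow_left hab 3
          _ = a^3 * b^3 := by ring
          _ ≤ 3^j * 3^k := Nat.mul_le_mul ha3 hb3
  | @mul a b j k _ _ iha ihb =>
    obtain ⟨ha, hj, ha3⟩ := iha
    obtain ⟨hb, hk, hb3⟩ := ihb
    refine ⟨le_trans (by norm_num) (Nat.mul_le_mul ha hb), by omega, ?_⟩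
    rw [pow_add]
    calc (a*b)^3 = a^3 * b^3 := by ring
      _ ≤ 3^j * 3^k := Nat.mul_le_mul ha3 hb3

lemma cpx_le {n k : ℕ} (h : CanWrite n k) : cpx n ≤ k := Nat.sInf_le h

lemma cw_cpx {n : ℕ} (hn : 0 < n) : CanWrite n (cpx n) :=
  Nat.sInf_mem (⟨n, cw_self n hn⟩ : {k | CanWrite n k}.Nonempty)

lemma cpx_cube {n : ℕ} (hn : 0 < n) : n ^ 3 ≤ 3 ^ cpx n := (cw_bound (cw_cpx hn)).2.2

lemma cpx_pos {n : ℕ} (hn : 0 < n) : 1 ≤ cpx n := (cw_bound (cw_cpx hn)).2.1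

lemma cpx_one : cpx 1 = 1 :=
  le_antisymm (cpx_le CanWrite.one) (cpx_pos one_pos)

lemma cpx_two : cpx 2 = 2 := by
  have h1 : cpx 2 ≤ 2 := cpx_le (CanWrite.add CanWrite.one CanWrite.one)
  have h2 : (2:ℕ)^3 ≤ 3 ^ cpx 2 := cpx_cube (by norm_num)
  have : 2 ≤ cpx 2 := by
    by_contra hc; push_neg at hc; interval_cases h : cpx 2 <;> norm_num at h2
  omega

lemma cpx_three : cpx 3 = 3 := by
  have h1 : cpx 3 ≤ 3 := cpx_le (CanWrite.add (CanWrite.add CanWrite.one CanWrite.one) CanWrite.one)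
  have h2 : (3:ℕ)^3 ≤ 3 ^ cpx 3 := cpx_cube (by norm_num)
  have : 3 ≤ cpx 3 := by
    by_contra hc; push_neg at hc; interval_cases h : cpx 3 <;> norm_num at h2
  omega

lemma cpx_four : cpx 4 = 4 := by
  have h1 : cpx 4 ≤ 4 := cpx_le
    (CanWrite.add (CanWrite.add (CanWrite.add CanWrite.one CanWrite.one) CanWrite.one) CanWrite.one)
  have h2 : (4:ℕ)^3 ≤ 3 ^ cpx 4 := cpx_cube (by norm_num)
  have : 4 ≤ cpx 4 := by
    by_contra hc; push_neg at hc; interval_cases h : cpx 4 <;> norm_num at h2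
  omega

/-- Optimal decomposition of a number `n ≥ 2`. -/
lemma decomposition {n : ℕ} (hn : 2 ≤ n) :
    (∃ a b, n = a + b ∧ 1 ≤ b ∧ b ≤ a ∧ a < n ∧ cpx n = cpx a + cpx b) ∨
    (∃ a b, n = a * b ∧ 2 ≤ a ∧ 2 ≤ b ∧ a < n ∧ b < n ∧ cpx n = cpx a + cpx b) := by
  obtain ⟨C, hC⟩ : ∃ C, cpx n = C := ⟨_, rfl⟩
  have h := cw_cpx (show 0 < n by omega)
  rw [hC] at h
  cases h with
  | one => omega
  | @add a b j k hA hB =>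
    obtain ⟨ha1, hj1, _⟩ := cw_bound hA
    obtain ⟨hb1, hk1, _⟩ := cw_bound hB
    left
    have hca : cpx a ≤ j := cpx_le hA
    have hcb : cpx b ≤ k := cpx_le hB
    have hub : cpx (a+b) ≤ cpx a + cpx b :=
      cpx_le (CanWrite.add (cw_cpx (by omega)) (cw_cpx (by omega)))
    rcases le_total b a with hba | hba
    · exact ⟨a, b, rfl, hb1, hba, by omega, by omega⟩
    · exact ⟨b, a, by omega, ha1, hba, by omega, by omega⟩
  | @mul a b j k hA hB =>
    obtain ⟨ha1, hj1, _⟩ := cw_bound hA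
    obtain ⟨hb1, hk1, _⟩ := cw_bound hB
    have hca : cpx a ≤ j := cpx_le hA
    have hcb : cpx b ≤ k := cpx_le hB
    have ha2 : 2 ≤ a := by
      by_contra h1
      have ha1' : a = 1 := by omega
      subst ha1'
      rw [one_mul] at hC
      omega
    have hb2 : 2 ≤ b := by
      by_contra h1
      have hb1' : b = 1 := by omega
      subst hb1'
      rw [mul_one] at hC
      omega
    right
    have hub : cpx (a*b) ≤ cpx a + cpx b :=
      cpx_le (CanWrite.mul (cw_cpx (by omega)) (cw_cpx (by omega)))
    refine ⟨a, b, rfl, ha2, hb2, ?_, ?_, by omega⟩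
    · calc a < a * 2 := by omega
        _ ≤ a * b := Nat.mul_le_mul_left a hb2
    · calc b < 2 * b := by omega
        _ ≤ a * b := Nat.mul_le_mul_right b ha2

lemma logb_nat_le {m c e : ℕ} (hm : 0 < m) (h : m ^ e ≤ 3 ^ c) :
    (e:ℝ) * Real.logb 3 m ≤ c := by
  have h' : ((m:ℝ))^e ≤ (3:ℝ)^c := by exact_mod_cast h
  have h2 := Real.logb_le_logb_of_le (b := 3) (by norm_num) (by positivity) h'
  rw [Real.logb_pow, Real.logb_pow, Real.logb_self_eq_one (by norm_num)] at h2
  linarith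

lemma nat_lt_logb {m c e : ℕ} (h : 3 ^ c < m ^ e) : (c:ℝ) < e * Real.logb 3 m := by
  have h' : (3:ℝ)^c < ((m:ℝ))^e := by exact_mod_cast h
  have h2 := Real.logb_lt_logb (b := 3) (by norm_num) (by positivity) h'
  rw [Real.logb_pow, Real.logb_pow, Real.logb_self_eq_one (by norm_num)] at h2
  linarith

lemma nat_le_logb {m c e : ℕ} (hm : 0 < m) (h : 3 ^ c ≤ m ^ e) : (c:ℝ) ≤ e * Real.logb 3 m := by
  have h' : (3:ℝ)^c ≤ ((m:ℝ))^e := by exact_mod_cast h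
  have h2 := Real.logb_le_logb_of_le (b := 3) (by norm_num) (by positivity) h'
  rw [Real.logb_pow, Real.logb_pow, Real.logb_self_eq_one (by norm_num)] at h2
  linarith

lemma logb_31_le {m c : ℕ} (hm : 0 < m) (h : 3 * m ^ 3 ≤ 3 ^ c) :
    1 + 3 * Real.logb 3 m ≤ c := by
  have h' : 3 * ((m:ℝ))^3 ≤ (3:ℝ)^c := by exact_mod_cast h
  have h2 := Real.logb_le_logb_of_le (b := 3) (by norm_num) (by positivity) h'
  rw [Real.logb_mul (by norm_num) (by positivity), Real.logb_pow, Real.logb_pow,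
    Real.logb_self_eq_one (by norm_num)] at h2
  push_cast at h2
  linarith

lemma lt_logb_31 {m c : ℕ} (hm : 0 < m) (h : 3 ^ c < 3 * m ^ 3) :
    (c:ℝ) < 1 + 3 * Real.logb 3 m := by
  have h' : (3:ℝ)^c < 3 * ((m:ℝ))^3 := by exact_mod_cast h
  have h2 := Real.logb_lt_logb (b := 3) (by norm_num) (by positivity) h'
  rw [Real.logb_mul (by norm_num) (by positivity), Real.logb_pow, Real.logb_pow,
    Real.logb_self_eq_one (by norm_num)] at h2
  push_cast at h2
  linarith

lemma logb_61_le {m c : ℕ} (hm : 0 < m) (h : 3 * m ^ 6 ≤ 3 ^ (2*c)) :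
    1 + 6 * Real.logb 3 m ≤ 2 * c := by
  have h' : 3 * ((m:ℝ))^6 ≤ (3:ℝ)^(2*c) := by exact_mod_cast h
  have h2 := Real.logb_le_logb_of_le (b := 3) (by norm_num) (by positivity) h'
  rw [Real.logb_mul (by norm_num) (by positivity), Real.logb_pow, Real.logb_pow,
    Real.logb_self_eq_one (by norm_num)] at h2
  push_cast at h2
  linarith
lemma cpx_ge_logb {n : ℕ} (hn : 0 < n) : 3 * Real.logb 3 n ≤ cpx n := by
  have := logb_nat_le hn (cpx_cube hn)
  push_cast at this
  linarith

lemma defect_nonneg {n : ℕ} (hn : 0 < n) : 0 ≤ defect n := by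
  have := cpx_ge_logb hn
  unfold defect
  linarith

lemma one_le_defect {n c : ℕ} (hn : 0 < n) (hc : cpx n = c) (h : 3 * n ^ 3 ≤ 3 ^ c) :
    1 ≤ defect n := by
  have := logb_31_le hn h
  unfold defect
  rw [hc]
  linarith

lemma not_defect_lt_one {n c : ℕ} (hn : 0 < n) (hc : cpx n = c) (h : 3 * n ^ 3 ≤ 3 ^ c) :
    ¬ defect n < 1 := not_lt.2 (one_le_defect hn hc h)

lemma half_le_defect {n c : ℕ} (hn : 0 < n) (hc : cpx n = c) (h : 3 * n ^ 6 ≤ 3 ^ (2*c)) :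
    (1/2 : ℝ) ≤ defect n := by
  have := logb_61_le hn h
  unfold defect
  rw [hc]
  linarith

lemma defect_lt_one' {n c : ℕ} (hn : 0 < n) (hc : cpx n = c) (h : 3 ^ c < 3 * n ^ 3) :
    defect n < 1 := by
  have := lt_logb_31 hn h
  unfold defect
  rw [hc]
  linarith

lemma defect_one : defect 1 = 1 := by
  unfold defect
  rw [cpx_one]
  norm_num

lemma defect_mul {a b : ℕ} (ha : 0 < a) (hb : 0 < b) (hc : cpx (a*b) = cpx a + cpx b) :
    defect (a*b) = defect a + defect b := by
  unfold defect
  rw [hc]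
  have : ((a*b : ℕ) : ℝ) = (a:ℝ) * (b:ℝ) := by push_cast; ring
  rw [this, Real.logb_mul (by positivity) (by positivity)]
  push_cast
  ring
lemma pow_pack (a k e : ℕ) : (a^k)^e = (a^e)^k := by
  rw [← pow_mul, mul_comm, pow_mul]

lemma famAdd1K (m c : ℕ) (h : 3*(m+1)^3 ≤ 3^(c+1)) :
    ∀ k, 3*(m*2^k+1)^3 ≤ 3^(c+2*k+1) := by
  intro k
  induction k with
  | zero => simpa using h
  | succ k ih =>
    have h1 : m*2^(k+1)+1 ≤ 2*(m*2^k+1) := by rw [pow_succ]; ring_nf; omega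
    calc 3*(m*2^(k+1)+1)^3 ≤ 3*(2*(m*2^k+1))^3 :=
          Nat.mul_le_mul_left 3 (Nat.pow_le_pow_left h1 3)
      _ = 8*(3*(m*2^k+1)^3) := by ring
      _ ≤ 9*3^(c+2*k+1) := by
          have := Nat.mul_le_mul_left 8 ih
          omega
      _ = 3^(c+2*(k+1)+1) := by ring

lemma famAdd1L (m c : ℕ) (h : 3*(m+1)^3 ≤ 3^(c+1)) :
    ∀ l, 3*(m*3^l+1)^3 ≤ 3^(c+3*l+1) := by
  intro l
  induction l with
  | zero => simpa using h
  | succ l ih =>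
    have h1 : m*3^(l+1)+1 ≤ 3*(m*3^l+1) := by rw [pow_succ]; ring_nf; omega
    calc 3*(m*3^(l+1)+1)^3 ≤ 3*(3*(m*3^l+1))^3 :=
          Nat.mul_le_mul_left 3 (Nat.pow_le_pow_left h1 3)
      _ = 27*(3*(m*3^l+1)^3) := by ring
      _ ≤ 27*3^(c+3*l+1) := Nat.mul_le_mul_left 27 ih
      _ = 3^(c+3*(l+1)+1) := by ring

lemma famAdd1 (m c : ℕ) (h : 3*(m+1)^3 ≤ 3^(c+1)) :
    ∀ k l, 3*(m*2^k*3^l+1)^3 ≤ 3^(c+2*k+3*l+1) := by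
  intro k l
  exact famAdd1L (m*2^k) (c+2*k) (famAdd1K m c h k) l

lemma famMul (m c : ℕ) (h : 3*m^3 ≤ 3^c) :
    ∀ k l, 3*(m*2^k*3^l)^3 ≤ 3^(c+2*k+3*l) := by
  intro k l
  have e1 : 3*(m*2^k*3^l)^3 = (3*m^3) * 8^k * 27^l := by
    have : (2^k)^3 = 8^k := by rw [pow_pack]; norm_num
    have h3 : (3^l)^3 = 27^l := by rw [pow_pack]; norm_num
    calc 3*(m*2^k*3^l)^3 = 3*m^3*((2^k)^3)*((3^l)^3) := by ring
      _ = (3*m^3) * 8^k * 27^l := by rw [this, h3]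
  have e2 : 3^(c+2*k+3*l) = 3^c * 9^k * 27^l := by
    rw [pow_add, pow_add, pow_mul, pow_mul]
    norm_num
  rw [e1, e2]
  exact Nat.mul_le_mul (Nat.mul_le_mul h (Nat.pow_le_pow_left (by norm_num) k)) le_rfl
lemma famJ1 : ∀ j, 2 ≤ j → 3*(3^j+2)^3 ≤ 3^(3*j+2) := by
  intro j hj
  induction j with
  | zero => omega
  | succ j ih =>
    rcases Nat.lt_or_ge j 2 with h2 | h2
    · interval_cases j
      · omega
      · norm_num
    · have h1 : 3^(j+1)+2 ≤ 3*(3^j+2) := by rw [pow_succ]; ring_nf; omega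
      calc 3*(3^(j+1)+2)^3 ≤ 3*(3*(3^j+2))^3 :=
            Nat.mul_le_mul_left 3 (Nat.pow_le_pow_left h1 3)
        _ = 27*(3*(3^j+2)^3) := by ring
        _ ≤ 27*3^(3*j+2) := Nat.mul_le_mul_left 27 (ih h2)
        _ = 3^(3*(j+1)+2) := by ring

lemma famJ2 : ∀ j, 3 ≤ j → 3*(2*(3^j+1))^3 ≤ 3^(3*j+3) := by
  intro j hj
  induction j with
  | zero => omega
  | succ j ih =>
    rcases Nat.lt_or_ge j 3 with h2 | h2
    · interval_cases j
      · omega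
      · omega
      · norm_num
    · have h1 : 2*(3^(j+1)+1) ≤ 3*(2*(3^j+1)) := by rw [pow_succ]; ring_nf; omega
      calc 3*(2*(3^(j+1)+1))^3 ≤ 3*(3*(2*(3^j+1)))^3 :=
            Nat.mul_le_mul_left 3 (Nat.pow_le_pow_left h1 3)
        _ = 27*(3*(2*(3^j+1))^3) := by ring
        _ ≤ 27*3^(3*j+3) := Nat.mul_le_mul_left 27 (ih h2)
        _ = 3^(3*(j+1)+3) := by ring

lemma famJ6 : ∀ j, 3 ≤ j → 3*(3^j+1)^6 ≤ 3^(2*(1+3*j)) := by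
  intro j hj
  induction j with
  | zero => omega
  | succ j ih =>
    rcases Nat.lt_or_ge j 3 with h2 | h2
    · interval_cases j
      · omega
      · omega
      · norm_num
    · have h1 : 3^(j+1)+1 ≤ 3*(3^j+1) := by rw [pow_succ]; ring_nf; omega
      calc 3*(3^(j+1)+1)^6 ≤ 3*(3*(3^j+1))^6 :=
            Nat.mul_le_mul_left 3 (Nat.pow_le_pow_left h1 6)
        _ = 729*(3*(3^j+1)^6) := by ring
        _ ≤ 729*3^(2*(1+3*j)) := Nat.mul_le_mul_left 729 (ih h2)
        _ = 3^(2*(1+3*(j+1))) := by ring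

lemma famE (q c0 : ℕ) (h : 3*q^6 ≤ 3^(2*c0)) :
    ∀ k l, 3*(q*2^k*3^l)^6 ≤ 3^(2*(c0+2*k+3*l)) := by
  intro k l
  have e1 : 3*(q*2^k*3^l)^6 = (3*q^6) * 64^k * 729^l := by
    have h2 : (2^k)^6 = 64^k := by rw [pow_pack]; norm_num
    have h3 : (3^l)^6 = 729^l := by rw [pow_pack]; norm_num
    calc 3*(q*2^k*3^l)^6 = 3*q^6*((2^k)^6)*((3^l)^6) := by ring
      _ = (3*q^6) * 64^k * 729^l := by rw [h2, h3]
  have e2 : 3^(2*(c0+2*k+3*l)) = 3^(2*c0) * 81^k * 729^l := by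
    have : 2*(c0+2*k+3*l) = 2*c0 + 4*k + 6*l := by ring
    rw [this, pow_add, pow_add, pow_mul 3 2 c0, pow_mul 3 4 k, pow_mul 3 6 l]
    norm_num
  rw [e1, e2]
  exact Nat.mul_le_mul (Nat.mul_le_mul h (Nat.pow_le_pow_left (by norm_num) k)) le_rfl

lemma famLt (m c : ℕ) (h : 3^c < 3*m^3) : ∀ l, 3^(c+3*l) < 3*(m*3^l)^3 := by
  intro l
  have e1 : 3*(m*3^l)^3 = (3*m^3) * 27^l := by
    have h3 : (3^l)^3 = 27^l := by rw [pow_pack]; norm_num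
    calc 3*(m*3^l)^3 = 3*m^3*((3^l)^3) := by ring
      _ = (3*m^3) * 27^l := by rw [h3]
  have e2 : 3^(c+3*l) = 3^c * 27^l := by
    rw [pow_add, pow_mul]; norm_num
  rw [e1, e2]
  have : (0:ℕ) < 27^l := by positivity
  exact Nat.mul_lt_mul_of_lt_of_le h le_rfl this
def TT (n : ℕ) : Prop :=
      ((∃ ℓ : ℕ, 1 ≤ ℓ ∧ n = 3 ^ ℓ ∧ cpx n = 3 * ℓ) ∨
       (∃ k ℓ : ℕ, 1 ≤ k ∧ k ≤ 9 ∧ n = 2 ^ k * 3 ^ ℓ ∧ cpx n = 2 * k + 3 * ℓ) ∨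
       (∃ k ℓ : ℕ, k ≤ 3 ∧ n = 5 * 2 ^ k * 3 ^ ℓ ∧ cpx n = 5 + 2 * k + 3 * ℓ) ∨
       (∃ k ℓ : ℕ, k ≤ 2 ∧ n = 7 * 2 ^ k * 3 ^ ℓ ∧ cpx n = 6 + 2 * k + 3 * ℓ) ∨
       (∃ ℓ : ℕ, n = 19 * 3 ^ ℓ ∧ cpx n = 9 + 3 * ℓ) ∨
       (∃ ℓ : ℕ, n = 13 * 3 ^ ℓ ∧ cpx n = 8 + 3 * ℓ) ∨
       (∃ k ℓ : ℕ, 1 ≤ k ∧ n = (3 ^ k + 1) * 3 ^ ℓ ∧ cpx n = 1 + 3 * k + 3 * ℓ))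

def QQ (q c0 : ℕ) : Prop :=
  (q = 1 ∧ c0 = 0) ∨ (q = 5 ∧ c0 = 5) ∨ (q = 7 ∧ c0 = 6) ∨ (q = 13 ∧ c0 = 8) ∨
  (q = 19 ∧ c0 = 9) ∨ (∃ j, 3 ≤ j ∧ q = 3^j+1 ∧ c0 = 1+3*j)

lemma canonical_of_TT {a : ℕ} (h : TT a) :
    ∃ q c0 k l, a = q * 2^k * 3^l ∧ cpx a = c0 + 2*k + 3*l ∧ QQ q c0 := by
  rcases h with ⟨l, hl, ha, hc⟩ | ⟨k, l, hk1, hk9, ha, hc⟩ | ⟨k, l, hk, ha, hc⟩ |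
    ⟨k, l, hk, ha, hc⟩ | ⟨l, ha, hc⟩ | ⟨l, ha, hc⟩ | ⟨k, l, hk, ha, hc⟩
  · exact ⟨1, 0, 0, l, by omega, by omega, Or.inl ⟨rfl, rfl⟩⟩
  · exact ⟨1, 0, k, l, by rw [ha]; ring, by omega, Or.inl ⟨rfl, rfl⟩⟩
  · exact ⟨5, 5, k, l, ha, by omega, Or.inr (Or.inl ⟨rfl, rfl⟩)⟩
  · exact ⟨7, 6, k, l, ha, by omega, Or.inr (Or.inr (Or.inl ⟨rfl, rfl⟩))⟩
  · exact ⟨19, 9, 0, l, by rw [ha]; ring, by omega,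
      Or.inr (Or.inr (Or.inr (Or.inr (Or.inl ⟨rfl, rfl⟩))))⟩
  · exact ⟨13, 8, 0, l, by rw [ha]; ring, by omega,
      Or.inr (Or.inr (Or.inr (Or.inl ⟨rfl, rfl⟩)))⟩
  · rcases Nat.lt_or_ge k 3 with h3 | h3
    · interval_cases k
      · exact ⟨1, 0, 2, l, by rw [ha]; norm_num, by omega, Or.inl ⟨rfl, rfl⟩⟩
      · exact ⟨5, 5, 1, l, by rw [ha]; norm_num, by omega, Or.inr (Or.inl ⟨rfl, rfl⟩)⟩
    · exact ⟨3^k+1, 1+3*k, 0, l, by rw [ha]; ring, by omega,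
        Or.inr (Or.inr (Or.inr (Or.inr (Or.inr ⟨k, h3, rfl, rfl⟩))))⟩

lemma helperMulContra (m c : ℕ) (hm : 0 < m) (hbase : 3*m^3 ≤ 3^c) (k l : ℕ) {n : ℕ}
    (hn : n = m*2^k*3^l) (hc : cpx n = c+2*k+3*l) : ¬ defect n < 1 := by
  subst hn
  exact not_defect_lt_one (by positivity) hc (famMul m c hbase k l)

lemma helperAddContra (m c : ℕ) (hbase : 3*(m+1)^3 ≤ 3^(c+1)) (k l : ℕ) {n : ℕ}
    (hn : n = m*2^k*3^l+1) (hc : cpx n = c+2*k+3*l+1) : ¬ defect n < 1 := by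
  subst hn
  exact not_defect_lt_one (by positivity) hc (famAdd1 m c hbase k l)

lemma helperHalf (q c0 : ℕ) (hq : 0 < q) (hbase : 3*q^6 ≤ 3^(2*c0)) (k l : ℕ) {x : ℕ}
    (hx : x = q*2^k*3^l) (hc : cpx x = c0+2*k+3*l) : (1/2 : ℝ) ≤ defect x := by
  subst hx
  exact half_le_defect (by positivity) hc (famE q c0 hbase k l)
lemma addCase (a : ℕ) (ha3 : 3 ≤ a) (hTa : TT a) {n : ℕ} (hn : n = a + 1)
    (hc : cpx n = cpx a + 1) (hd : defect n < 1) : TT n := by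
  obtain ⟨q, c0, k, l, hae, hca, hQ⟩ := canonical_of_TT hTa
  have hcn : cpx n = c0 + 2*k + 3*l + 1 := by rw [hc, hca]
  have hne : n = q*2^k*3^l + 1 := by rw [hn, hae]
  clear hc hn hTa
  rcases hQ with ⟨rfl, rfl⟩ | ⟨rfl, rfl⟩ | ⟨rfl, rfl⟩ | ⟨rfl, rfl⟩ | ⟨rfl, rfl⟩ |
    ⟨j, hj, rfl, rfl⟩
  · -- q = 1
    rcases Nat.eq_zero_or_pos k with rfl | hk1
    · -- a = 3^l
      have hl1 : 1 ≤ l := by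
        by_contra hl
        push_neg at hl
        interval_cases l
        norm_num at hae
        omega
      refine Or.inr (Or.inr (Or.inr (Or.inr (Or.inr (Or.inr ⟨l, 0, hl1, ?_, ?_⟩)))))
      · rw [hne]; ring
      · omega
    · rcases Nat.lt_or_ge k 3 with hk3 | hk3
      · interval_cases k
        · -- k = 1, a = 2*3^l
          rcases Nat.lt_or_ge l 3 with hl3 | hl3
          · interval_cases l
            · exact Or.inl ⟨1, le_refl 1, by rw [hne]; norm_num, by push_cast; omega⟩
            · refine Or.inr (Or.inr (Or.inr (Or.inl ⟨0, 0, by norm_num, ?_, ?_⟩)))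
              · rw [hne]; norm_num
              · omega
            · refine Or.inr (Or.inr (Or.inr (Or.inr (Or.inl ⟨0, ?_, ?_⟩))))
              · rw [hne]; norm_num
              · omega
          · obtain ⟨l', rfl⟩ := Nat.exists_eq_add_of_le hl3
            exact absurd hd (helperAddContra 54 11 (by norm_num) 0 l'
              (by rw [hne, pow_add]; ring) (by omega))
        · -- k = 2, a = 4*3^l
          rcases Nat.lt_or_ge l 2 with hl2 | hl2
          · interval_cases l
            · refine Or.inr (Or.inr (Or.inl ⟨0, 0, by norm_num, ?_, ?_⟩))
              · rw [hne]; norm_num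
              · omega
            · refine Or.inr (Or.inr (Or.inr (Or.inr (Or.inr (Or.inl ⟨0, ?_, ?_⟩)))))
              · rw [hne]; norm_num
              · omega
          · obtain ⟨l', rfl⟩ := Nat.exists_eq_add_of_le hl2
            exact absurd hd (helperAddContra 36 10 (by norm_num) 0 l'
              (by rw [hne, pow_add]; ring) (by omega))
      · -- k ≥ 3
        obtain ⟨k', rfl⟩ := Nat.exists_eq_add_of_le hk3
        exact absurd hd (helperAddContra 8 6 (by norm_num) k' l
          (by rw [hne, pow_add]; ring) (by omega))
  · exact absurd hd (helperAddContra 5 5 (by norm_num) k l hne (by omega))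
  · exact absurd hd (helperAddContra 7 6 (by norm_num) k l hne (by omega))
  · exact absurd hd (helperAddContra 13 8 (by norm_num) k l hne (by omega))
  · exact absurd hd (helperAddContra 19 9 (by norm_num) k l hne (by omega))
  · -- q = 3^j+1, j ≥ 3
    have hbase : 3*((3^j+1)+1)^3 ≤ 3^((1+3*j)+1) := by
      have := famJ1 j (by omega)
      have he : (1+3*j)+1 = 3*j+2 := by omega
      rw [he]
      have he2 : (3^j+1)+1 = 3^j+2 := by omega
      rw [he2]
      exact this
    exact absurd hd (helperAddContra (3^j+1) (1+3*j) hbase k l hne (by omega))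
lemma mulQ1 (q c0 K L : ℕ) (hQ : QQ q c0) (hL : q = 1 → K = 0 → 1 ≤ L) {n : ℕ}
    (hn : n = q*2^K*3^L) (hc : cpx n = c0+2*K+3*L) (hd : defect n < 1) : TT n := by
  rcases hQ with ⟨rfl, rfl⟩ | ⟨rfl, rfl⟩ | ⟨rfl, rfl⟩ | ⟨rfl, rfl⟩ | ⟨rfl, rfl⟩ |
    ⟨j, hj, rfl, rfl⟩
  · -- q = 1
    rcases Nat.eq_zero_or_pos K with rfl | hK1
    · exact Or.inl ⟨L, hL rfl rfl, by rw [hn]; ring, by omega⟩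
    · rcases Nat.lt_or_ge K 10 with hK9 | hK10
      · exact Or.inr (Or.inl ⟨K, L, hK1, by omega, by rw [hn]; ring, by omega⟩)
      · obtain ⟨K', rfl⟩ := Nat.exists_eq_add_of_le hK10
        exact absurd hd (helperMulContra 1024 20 (by norm_num) (by norm_num) K' L
          (by rw [hn, pow_add]; ring) (by omega))
  · -- q = 5
    rcases Nat.lt_or_ge K 4 with hK | hK
    · exact Or.inr (Or.inr (Or.inl ⟨K, L, by omega, hn, by omega⟩))
    · obtain ⟨K', rfl⟩ := Nat.exists_eq_add_of_le hK
      exact absurd hd (helperMulContra 80 13 (by norm_num) (by norm_num) K' L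
        (by rw [hn, pow_add]; ring) (by omega))
  · -- q = 7
    rcases Nat.lt_or_ge K 3 with hK | hK
    · exact Or.inr (Or.inr (Or.inr (Or.inl ⟨K, L, by omega, hn, by omega⟩)))
    · obtain ⟨K', rfl⟩ := Nat.exists_eq_add_of_le hK
      exact absurd hd (helperMulContra 56 12 (by norm_num) (by norm_num) K' L
        (by rw [hn, pow_add]; ring) (by omega))
  · -- q = 13
    rcases Nat.eq_zero_or_pos K with rfl | hK
    · exact Or.inr (Or.inr (Or.inr (Or.inr (Or.inr (Or.inl ⟨L, by rw [hn]; ring, by omega⟩)))))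
    · obtain ⟨K', rfl⟩ := Nat.exists_eq_add_of_le hK
      exact absurd hd (helperMulContra 26 10 (by norm_num) (by norm_num) K' L
        (by rw [hn, pow_add]; ring) (by omega))
  · -- q = 19
    rcases Nat.eq_zero_or_pos K with rfl | hK
    · exact Or.inr (Or.inr (Or.inr (Or.inr (Or.inl ⟨L, by rw [hn]; ring, by omega⟩))))
    · obtain ⟨K', rfl⟩ := Nat.exists_eq_add_of_le hK
      exact absurd hd (helperMulContra 38 11 (by norm_num) (by norm_num) K' L
        (by rw [hn, pow_add]; ring) (by omega))
  · -- q = 3^j+1, j ≥ 3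
    rcases Nat.eq_zero_or_pos K with rfl | hK
    · exact Or.inr (Or.inr (Or.inr (Or.inr (Or.inr (Or.inr
        ⟨j, L, by omega, by rw [hn]; ring, by omega⟩)))))
    · obtain ⟨K', rfl⟩ := Nat.exists_eq_add_of_le hK
      have hbase : 3*(2*(3^j+1))^3 ≤ 3^(3*j+3) := famJ2 j hj
      exact absurd hd (helperMulContra (2*(3^j+1)) (3*j+3) (by positivity) hbase K' L
        (by rw [hn, pow_add]; ring) (by omega))

lemma QQ_half {q c0 : ℕ} (hQ : QQ q c0) (hq1 : q ≠ 1) (k l : ℕ) {x : ℕ}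
    (hx : x = q*2^k*3^l) (hc : cpx x = c0+2*k+3*l) : (1/2 : ℝ) ≤ defect x := by
  rcases hQ with ⟨rfl, rfl⟩ | ⟨rfl, rfl⟩ | ⟨rfl, rfl⟩ | ⟨rfl, rfl⟩ | ⟨rfl, rfl⟩ |
    ⟨j, hj, rfl, rfl⟩
  · omega
  · exact helperHalf 5 5 (by norm_num) (by norm_num) k l hx hc
  · exact helperHalf 7 6 (by norm_num) (by norm_num) k l hx hc
  · exact helperHalf 13 8 (by norm_num) (by norm_num) k l hx hc
  · exact helperHalf 19 9 (by norm_num) (by norm_num) k l hx hc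
  · exact helperHalf (3^j+1) (1+3*j) (by positivity) (famJ6 j hj) k l hx hc

lemma mulCase {n a b : ℕ} (ha2 : 2 ≤ a) (hb2 : 2 ≤ b) (hn : n = a*b)
    (hc : cpx n = cpx a + cpx b) (hd : defect n < 1)
    (hTa : TT a) (hTb : TT b) : TT n := by
  obtain ⟨q1, c1, k1, l1, hae, hca, hQ1⟩ := canonical_of_TT hTa
  obtain ⟨q2, c2, k2, l2, hbe, hcb, hQ2⟩ := canonical_of_TT hTb
  have hdm : defect n = defect a + defect b := by
    rw [hn]
    exact defect_mul (by omega) (by omega) (hn ▸ hc)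
  by_cases h1 : q1 = 1
  · -- a = 2^k1 3^l1 : combine into b's class
    have hc1 : c1 = 0 := by
      rcases hQ1 with ⟨_, h⟩ | ⟨h, _⟩ | ⟨h, _⟩ | ⟨h, _⟩ | ⟨h, _⟩ | ⟨j, _, h, _⟩
      · exact h
      · omega
      · omega
      · omega
      · omega
      · have hp : 1 ≤ 3^j := Nat.one_le_pow _ _ (by norm_num)
        omega
    subst h1 hc1
    refine mulQ1 q2 c2 (k2+k1) (l2+l1) hQ2 ?_ (by rw [hn, hae, hbe, pow_add, pow_add]; ring)
      (by omega) hd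
    intro hq2 hK0
    have hl0 : k1 = 0 ∧ k2 = 0 := by omega
    subst hq2
    have : 1 ≤ l1 := by
      by_contra hl
      push_neg at hl
      interval_cases l1
      rw [hl0.1] at hae
      norm_num at hae
      omega
    omega
  · by_cases h2 : q2 = 1
    · have hc2 : c2 = 0 := by
        rcases hQ2 with ⟨_, h⟩ | ⟨h, _⟩ | ⟨h, _⟩ | ⟨h, _⟩ | ⟨h, _⟩ | ⟨j, _, h, _⟩
        · exact h
        · omega
        · omega
        · omega
        · omega
        · have hp : 1 ≤ 3^j := Nat.one_le_pow _ _ (by norm_num)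
          omega
      subst h2 hc2
      refine mulQ1 q1 c1 (k1+k2) (l1+l2) hQ1 (fun hq1 _ => absurd hq1 h1)
        (by rw [hn, hae, hbe, pow_add, pow_add]; ring) (by omega) hd
    · -- both non-trivial: defect ≥ 1
      exfalso
      have hha := QQ_half hQ1 h1 k1 l1 hae hca
      have hhb := QQ_half hQ2 h2 k2 l2 hbe hcb
      rw [hdm] at hd
      linarith
lemma logb_ratio {x y : ℕ} (hx : 0 < x) (hy : 0 < y) (h : y^3 ≤ 3*x^3) :
    3*Real.logb 3 (y:ℝ) ≤ 1 + 3*Real.logb 3 (x:ℝ) := by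
  have h' : ((y:ℝ))^3 ≤ 3*((x:ℝ))^3 := by exact_mod_cast h
  have h2 := Real.logb_le_logb_of_le (b := 3) (by norm_num) (by positivity) h'
  rw [Real.logb_mul (by norm_num) (by positivity), Real.logb_pow, Real.logb_pow,
    Real.logb_self_eq_one (by norm_num)] at h2
  push_cast at h2
  linarith

lemma add_defect_lb {a b : ℕ} (hb : 3 ≤ b) (hba : b ≤ a) :
    (1:ℝ) ≤ (cpx a : ℝ) + (cpx b : ℝ) - 3*Real.logb 3 ((a:ℝ) + (b:ℝ)) := by
  have ha : 0 < a := by omega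
  have hla : 3*Real.logb 3 a ≤ (cpx a : ℝ) := cpx_ge_logb ha
  have hlb : (3:ℝ) ≤ (cpx b : ℝ) := by
    have h1 : ((3:ℕ):ℝ) ≤ ((3:ℕ):ℝ) * Real.logb 3 (b:ℝ) :=
      nat_le_logb (by omega) (show 3^3 ≤ b^3 from Nat.pow_le_pow_left hb 3)
    have h2 := cpx_ge_logb (show 0 < b by omega)
    push_cast at h1
    linarith
  have hmono : Real.logb 3 ((a:ℝ) + (b:ℝ)) ≤ Real.logb 3 (2*(a:ℝ)) := by
    apply Real.logb_le_logb_of_le (b := 3) (by norm_num)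
    · exact_mod_cast (show 0 < a + b by omega)
    · exact_mod_cast (show a + b ≤ 2*a by omega)
  have hsplit : Real.logb 3 (2*(a:ℝ)) = Real.logb 3 (2:ℝ) + Real.logb 3 (a:ℝ) := by
    rw [Real.logb_mul (by norm_num) (by positivity)]
  have hl2 : 3*Real.logb 3 (2:ℝ) ≤ 2 := by
    have h3 : ((3:ℕ):ℝ) * Real.logb 3 ((2:ℕ):ℝ) ≤ ((2:ℕ):ℝ) :=
      logb_nat_le (by norm_num) (by norm_num)
    push_cast at h3
    linarith
  linarith

lemma add2_defect_lb {a : ℕ} (ha : 5 ≤ a) :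
    (1:ℝ) ≤ (cpx a : ℝ) + 2 - 3*Real.logb 3 ((a:ℝ) + 2) := by
  have hla := cpx_ge_logb (show 0 < a by omega)
  have hr := logb_ratio (show 0 < a by omega) (show 0 < a+2 by omega) (cube2 ha)
  push_cast at hr
  linarith

lemma add1_defect_mono {a : ℕ} (ha : 3 ≤ a) :
    defect a ≤ (cpx a : ℝ) + 1 - 3*Real.logb 3 ((a:ℝ) + 1) := by
  unfold defect
  have hr := logb_ratio (show 0 < a by omega) (show 0 < a+1 by omega) (cube1 ha)
  push_cast at hr
  linarith

lemma main_forward : ∀ n, 0 < n → defect n < 1 → TT n := by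
  intro n
  induction n using Nat.strong_induction_on with
  | _ n IH =>
    intro hn hd
    rcases Nat.lt_or_ge n 2 with h2 | h2
    · exfalso
      have hn1 : n = 1 := by omega
      rw [hn1, defect_one] at hd
      linarith
    rcases decomposition h2 with ⟨a, b, hn', hb1, hba, haN, hc⟩ |
      ⟨a, b, hn', ha2, hb2, haN, hbN, hc⟩
    · -- addition case
      subst hn'
      have ha1 : 1 ≤ a := le_trans hb1 hba
      have hble : b ≤ 2 := by
        by_contra hb3
        push_neg at hb3
        have := add_defect_lb (show 3 ≤ b by omega) hba
        unfold defect at hd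
        rw [hc] at hd
        push_cast at hd
        linarith
      interval_cases b
      · -- b = 1
        rw [cpx_one] at hc
        rcases Nat.lt_or_ge a 3 with hA | hA
        · interval_cases a
          · -- n = 2
            refine Or.inr (Or.inl ⟨1, 0, by norm_num, by norm_num, by norm_num, ?_⟩)
            rw [cpx_one] at hc
            omega
          · -- n = 3
            refine Or.inl ⟨1, le_refl 1, by norm_num, ?_⟩
            rw [cpx_two] at hc
            omega
        · have hda : defect a < 1 := by
            have hm := add1_defect_mono hA
            unfold defect at hd
            rw [hc] at hd
            push_cast at hd
            linarith
          exact addCase a hA (IH a (by omega) (by omega) hda) rfl hc hd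
      · -- b = 2
        rw [cpx_two] at hc
        rcases Nat.lt_or_ge a 5 with hA | hA
        · interval_cases a
          · -- n = 4
            refine Or.inr (Or.inl ⟨2, 0, by norm_num, by norm_num, by norm_num, ?_⟩)
            rw [cpx_two] at hc
            omega
          · -- n = 5
            refine Or.inr (Or.inr (Or.inl ⟨0, 0, by norm_num, by norm_num, ?_⟩))
            rw [cpx_three] at hc
            omega
          · -- n = 6 : contradiction
            exfalso
            rw [cpx_four] at hc
            exact (not_defect_lt_one (by norm_num) (show cpx (4+2) = 6 by omega)
              (by norm_num)) hd
        · exfalso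
          have := add2_defect_lb hA
          unfold defect at hd
          rw [hc] at hd
          push_cast at hd
          linarith
    · -- multiplication case
      subst hn'
      have hdm := defect_mul (show 0 < a by omega) (show 0 < b by omega) hc
      have h0a := defect_nonneg (show 0 < a by omega)
      have h0b := defect_nonneg (show 0 < b by omega)
      have hda : defect a < 1 := by rw [hdm] at hd; linarith
      have hdb : defect b < 1 := by rw [hdm] at hd; linarith
      exact mulCase ha2 hb2 rfl hc hd (IH a haN (by omega) hda) (IH b hbN (by omega) hdb)
theorem defect_lt_one_classification (n : ℕ) (hn : 0 < n) :
    defect n < 1 ↔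
      ((∃ ℓ : ℕ, 1 ≤ ℓ ∧ n = 3 ^ ℓ ∧ cpx n = 3 * ℓ) ∨
       (∃ k ℓ : ℕ, 1 ≤ k ∧ k ≤ 9 ∧ n = 2 ^ k * 3 ^ ℓ ∧ cpx n = 2 * k + 3 * ℓ) ∨
       (∃ k ℓ : ℕ, k ≤ 3 ∧ n = 5 * 2 ^ k * 3 ^ ℓ ∧ cpx n = 5 + 2 * k + 3 * ℓ) ∨
       (∃ k ℓ : ℕ, k ≤ 2 ∧ n = 7 * 2 ^ k * 3 ^ ℓ ∧ cpx n = 6 + 2 * k + 3 * ℓ) ∨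
       (∃ ℓ : ℕ, n = 19 * 3 ^ ℓ ∧ cpx n = 9 + 3 * ℓ) ∨
       (∃ ℓ : ℕ, n = 13 * 3 ^ ℓ ∧ cpx n = 8 + 3 * ℓ) ∨
       (∃ k ℓ : ℕ, 1 ≤ k ∧ n = (3 ^ k + 1) * 3 ^ ℓ ∧ cpx n = 1 + 3 * k + 3 * ℓ)) := by
  constructor
  · intro hd
    have := main_forward n hn hd
    unfold TT at this
    exact this
  · intro h
    rcases h with ⟨l, hl, hne, hcv⟩ | ⟨k, l, hk1, hk9, hne, hcv⟩ | ⟨k, l, hk, hne, hcv⟩ |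
      ⟨k, l, hk, hne, hcv⟩ | ⟨l, hne, hcv⟩ | ⟨l, hne, hcv⟩ | ⟨k, l, hk, hne, hcv⟩
    · subst hne
      refine defect_lt_one' (by positivity) hcv ?_
      have e : ((3:ℕ)^l)^3 = 3^(3*l) := by rw [← pow_mul, mul_comm]
      have hp : 1 ≤ (3:ℕ)^(3*l) := Nat.one_le_pow _ _ (by norm_num)
      omega
    · subst hne
      refine defect_lt_one' (by positivity) hcv ?_
      have := famLt (2^k) (2*k) (by interval_cases k <;> norm_num) l
      exact this
    · subst hne
      refine defect_lt_one' (by positivity) hcv ?_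
      have := famLt (5*2^k) (5+2*k) (by interval_cases k <;> norm_num) l
      exact this
    · subst hne
      refine defect_lt_one' (by positivity) hcv ?_
      have := famLt (7*2^k) (6+2*k) (by interval_cases k <;> norm_num) l
      exact this
    · subst hne
      refine defect_lt_one' (by positivity) hcv ?_
      exact famLt 19 9 (by norm_num) l
    · subst hne
      refine defect_lt_one' (by positivity) hcv ?_
      exact famLt 13 8 (by norm_num) l
    · subst hne
      refine defect_lt_one' (by positivity) hcv ?_
      refine famLt (3^k+1) (1+3*k) ?_ l
      have h1 : (3:ℕ)^(3*k) < (3^k+1)^3 := by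
        have := Nat.pow_lt_pow_left (show (3:ℕ)^k < 3^k+1 by omega) (n := 3) (by norm_num)
        have e : ((3:ℕ)^k)^3 = 3^(3*k) := by rw [← pow_mul, mul_comm]
        omega
      have e2 : (3:ℕ)^(1+3*k) = 3*3^(3*k) := by rw [pow_add]; ring
      omega
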